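/- Let p > 2 and let φ : [0,∞) → [p-2,∞) be defined implicitly by p(1-1/p)^{p-1}(1+φ(s))^{p-2}(φ(s)-p+2) = s. Then φ is differentiable on (0,∞) and φ'(s) = (1+φ(s))(φ(s)-p+2) / ((p-1)s(φ(s)-p+3)) for all s > 0. -/

import Mathlib

/-! With `c = p - 2` and `C = p (1 - 1/p)^(p-1) > 0`, `φ` is a left inverse on `[0, ∞)` of
`F x = C (1 + x)^c (x - c)`, which is strictly increasing on `[c, ∞)` with `F c = 0`. A monotone left
inverse whose image is a neighbourhood is continuous, so the inverse function rule gives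
`φ'(s) = 1 / F'(φ s)`, and `F'(x) = C (c + 1) (1 + x)^(c - 1) (x - c + 1)`; dividing by
`s = C (1 + x)^c (x - c)` at `x = φ s` yields the formula. -/

open Set Real

theorem StrictMonoOn.continuousAt_leftInverse {F φ : ℝ → ℝ} {a s : ℝ}
    (hF : StrictMonoOn F (Ici a)) (hφ : ∀ t, F a ≤ t → a ≤ φ t)
    (hFφ : ∀ t, F a ≤ t → F (φ t) = t) (hs : F a < s) : ContinuousAt φ s := by
  have hφmono : StrictMonoOn φ (Ici (F a)) := fun t ht u hu htu => by
    rwa [← hF.lt_iff_lt (hφ t ht) (hφ u hu), hFφ t ht, hFφ u hu]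
  have hsurj : Ici a ⊆ φ '' Ici (F a) := fun x hx =>
    have hFx : F a ≤ F x := hF.monotoneOn self_mem_Ici hx hx
    ⟨F x, hFx, hF.injOn (hφ _ hFx) hx (hFφ _ hFx)⟩
  have hφs : a < φ s := (hφ s hs.le).lt_of_ne fun h => hs.ne (by rw [h, hFφ s hs.le])
  exact hφmono.continuousAt_of_image_mem_nhds (Ici_mem_nhds hs)
    (Filter.mem_of_superset (Ici_mem_nhds hφs) hsurj)

theorem StrictMonoOn.hasDerivAt_leftInverse {F φ : ℝ → ℝ} {a s D : ℝ}
    (hF : StrictMonoOn F (Ici a)) (hφ : ∀ t, F a ≤ t → a ≤ φ t)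
    (hFφ : ∀ t, F a ≤ t → F (φ t) = t) (hs : F a < s)
    (hD : HasDerivAt F D (φ s)) (hD0 : D ≠ 0) : HasDerivAt φ D⁻¹ s :=
  hD.of_local_left_inverse (hF.continuousAt_leftInverse hφ hFφ hs) hD0
    (Filter.mem_of_superset (Ici_mem_nhds hs) hFφ)

theorem strictMonoOn_one_add_rpow_mul_sub {c : ℝ} (hc : 0 ≤ c) :
    StrictMonoOn (fun x : ℝ => (1 + x) ^ c * (x - c)) (Ici c) := by
  intro x hx y hy hxy
  have hx1 : 0 < 1 + x := by simp only [mem_Ici] at hx; linarith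
  calc (1 + x) ^ c * (x - c) < (1 + x) ^ c * (y - c) :=
        mul_lt_mul_of_pos_left (by linarith) (rpow_pos_of_pos hx1 c)
    _ ≤ (1 + y) ^ c * (y - c) :=
        mul_le_mul_of_nonneg_right (rpow_le_rpow hx1.le (by linarith) hc) (sub_nonneg.2 hy)

theorem hasDerivAt_one_add_rpow_mul_sub {c x : ℝ} (hx : 0 < 1 + x) :
    HasDerivAt (fun y : ℝ => (1 + y) ^ c * (y - c))
      ((c + 1) * (1 + x) ^ (c - 1) * (x - c + 1)) x := by
  have hpow : HasDerivAt (fun y : ℝ => (1 + y) ^ c) (c * (1 + x) ^ (c - 1)) x := by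
    simpa using ((hasDerivAt_id x).const_add 1).rpow_const (p := c) (Or.inl hx.ne')
  refine (hpow.mul ((hasDerivAt_id x).sub_const c)).congr_deriv ?_
  rw [rpow_sub_one hx.ne', id]
  field_simp
  ring

theorem stmt_5 (p : ℝ) (hp : 2 < p) (φ : ℝ → ℝ)
    (hφ0 : ∀ s, 0 ≤ s → p - 2 ≤ φ s)
    (hφ : ∀ s, 0 ≤ s →
      p * (1 - 1 / p) ^ (p - 1) * (1 + φ s) ^ (p - 2) * (φ s - p + 2) = s) :
    ∀ s, 0 < s →
      HasDerivAt φ ((1 + φ s) * (φ s - p + 2) / ((p - 1) * s * (φ s - p + 3))) s := by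
  intro s hs
  set C := p * (1 - 1 / p) ^ (p - 1)
  set F : ℝ → ℝ := fun x => C * ((1 + x) ^ (p - 2) * (x - (p - 2)))
  have hC : 0 < C :=
    mul_pos (by linarith) (rpow_pos_of_pos (sub_pos.2 ((div_lt_one (by linarith)).2 (by linarith))) _)
  have hF0 : F (p - 2) = 0 := by simp [F]
  have hFφ : ∀ t, F (p - 2) ≤ t → F (φ t) = t := fun t ht => by
    simp only [F]; linear_combination hφ t (hF0 ▸ ht)
  set x := φ s
  have hx : p - 2 ≤ x := hφ0 s hs.le
  have hx1 : 0 < 1 + x := by linarith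
  have hFmono : StrictMonoOn F (Ici (p - 2)) :=
    (strictMono_mul_left_of_pos hC).comp_strictMonoOn
      (strictMonoOn_one_add_rpow_mul_sub (by linarith))
  have hD := (hasDerivAt_one_add_rpow_mul_sub (c := p - 2) hx1).const_mul C
  have hderiv := hFmono.hasDerivAt_leftInverse (fun t ht => hφ0 t (hF0 ▸ ht)) hFφ (hF0 ▸ hs) hD
    (mul_pos hC (mul_pos (mul_pos (by linarith) (rpow_pos_of_pos hx1 _)) (by linarith))).ne'
  have hs_eq : C * ((1 + x) ^ (p - 2) * (x - (p - 2))) = s := hFφ s (hF0 ▸ hs.le)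
  have hx2 : x - (p - 2) ≠ 0 := fun h => hs.ne' (by rw [← hs_eq, h, mul_zero, mul_zero])
  convert hderiv using 1
  rw [← hs_eq, rpow_sub_one hx1.ne']
  field_simp
  ring
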